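/- Let (X, G, Φ) be a dynamical system where X is a compact totally disconnected Hausdorff space and G is a finitely generated group, and let S be a finite generator of G. Then Φ has the S-shadowing property if and only if (X, G, Φ) is conjugate to the inverse limit of an inverse system of dynamical systems, satisfying the Mittag-Leffler condition, each of whose terms is a shift of finite type (a subshift of a full shift over some finite alphabet that is of finite type over some finite subset of G, with the shift G-action). -/

import Mathlib

open Set

universe u

/-! ### Dynamical systems: actions of a countable discrete group by homeomorphisms -/

/-- An action of a group `G` on a topological space `X`: each `act g` is a homeomorphism
(continuity of the inverse follows from `act g⁻¹`). -/
structure DynAction (G X : Type u) [Group G] [TopologicalSpace X] where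
  act : G → X → X
  continuous_act : ∀ g : G, Continuous (act g)
  act_one : ∀ x : X, act 1 x = x
  act_mul : ∀ (g g' : G) (x : X), act (g * g') x = act g (act g' x)

section Covers

variable {G X : Type u} [Group G] [TopologicalSpace X]

/-- A finite open cover of `X`. -/
def IsFOC (𝒰 : Finset (Set X)) : Prop :=
  (∀ U ∈ 𝒰, IsOpen U) ∧ ⋃₀ (𝒰 : Set (Set X)) = Set.univ

/-- A finite partition of `X` into nonempty clopen sets. -/
def IsClopenPartition (𝒰 : Finset (Set X)) : Prop :=
  (∀ U ∈ 𝒰, IsClopen U ∧ U.Nonempty) ∧ ⋃₀ (𝒰 : Set (Set X)) = Set.univ ∧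
    ∀ U ∈ 𝒰, ∀ V ∈ 𝒰, U ≠ V → U ∩ V = ∅

/-- `𝒱` refines `𝒰`: every member of `𝒱` is contained in a member of `𝒰`. -/
def Refines (𝒱 𝒰 : Finset (Set X)) : Prop :=
  ∀ V ∈ 𝒱, ∃ U ∈ 𝒰, V ⊆ U

/-- `{U g}` is a pattern of the `(S,𝒰)`-pseudo-orbit `{x g}`:
all `U g` belong to `𝒰`, and `x (s*g) ∈ U (s*g)` and `Φ_s (x g) ∈ U (s*g)`
for all `g ∈ G`, `s ∈ S`. -/
def IsPseudoOrbitPattern (Φ : DynAction G X) (S : Set G) (𝒰 : Finset (Set X))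
    (x : G → X) (U : G → Set X) : Prop :=
  (∀ g : G, U g ∈ 𝒰) ∧
    ∀ g : G, ∀ s ∈ S, x (s * g) ∈ U (s * g) ∧ Φ.act s (x g) ∈ U (s * g)

/-- `{x g}` is an `(S,𝒰)`-pseudo-orbit. -/
def IsPseudoOrbit (Φ : DynAction G X) (S : Set G) (𝒰 : Finset (Set X)) (x : G → X) : Prop :=
  ∃ U : G → Set X, IsPseudoOrbitPattern Φ S 𝒰 x U

/-- `z` `𝒰`-shadows the family `{x g}`. -/
def Shadows (Φ : DynAction G X) (𝒰 : Finset (Set X)) (z : X) (x : G → X) : Prop :=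
  ∀ g : G, ∃ U ∈ 𝒰, Φ.act g z ∈ U ∧ x g ∈ U

/-- The (topological) `S`-shadowing property. -/
def ShadowingProperty (Φ : DynAction G X) (S : Set G) : Prop :=
  ∀ 𝒰 : Finset (Set X), IsFOC 𝒰 → ∃ 𝒱 : Finset (Set X), IsFOC 𝒱 ∧
    ∀ x : G → X, IsPseudoOrbit Φ S 𝒱 x → ∃ z : X, Shadows Φ 𝒰 z x

/-! ### Equivariant maps, factor maps, conjugacies -/

def IsEquivariant {Y : Type u} [TopologicalSpace Y]
    (ΦX : DynAction G X) (ΦY : DynAction G Y) (f : X → Y) : Prop :=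
  ∀ (g : G) (x : X), f (ΦX.act g x) = ΦY.act g (f x)

/-- `f` is a factor map from `(X,G,ΦX)` onto `(Y,G,ΦY)`. -/
def IsFactorMap {Y : Type u} [TopologicalSpace Y]
    (ΦX : DynAction G X) (ΦY : DynAction G Y) (f : X → Y) : Prop :=
  Continuous f ∧ Function.Surjective f ∧ IsEquivariant ΦX ΦY f

/-- `f` is a conjugacy (bijective factor map). -/
def IsConjugacy {Y : Type u} [TopologicalSpace Y]
    (ΦX : DynAction G X) (ΦY : DynAction G Y) (f : X → Y) : Prop :=
  Continuous f ∧ Function.Bijective f ∧ IsEquivariant ΦX ΦY f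

end Covers

/-! ### Shifts, subshifts, shifts of finite type -/

/-- The shift action on `A^G`: `(σ_g x) h = x (h * g)`. -/
def shift (G A : Type u) [Group G] (g : G) (x : G → A) : G → A :=
  fun h => x (h * g)

/-- The full shift `A^G` (product topology) as a dynamical system. -/
def shiftDyn (G A : Type u) [Group G] [TopologicalSpace A] : DynAction G (G → A) where
  act := shift G A
  continuous_act g := continuous_pi fun h => continuous_apply (h * g)
  act_one x := by funext h; simp [shift]
  act_mul g g' x := by funext h; simp [shift, mul_assoc]

/-- A subshift: a closed shift-invariant subset of the full shift `A^G`. -/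
def IsSubshift {G A : Type u} [Group G] [TopologicalSpace A] (Y : Set (G → A)) : Prop :=
  IsClosed Y ∧ ∀ g : G, ∀ x ∈ Y, shift G A g x ∈ Y

/-- The cylinder set determined by the values of `P` on the finite shape `B`. -/
def cylinder {G A : Type u} (B : Finset G) (P : G → A) : Set (G → A) :=
  {y | ∀ b ∈ B, y b = P b}

/-- The language of `Y ⊆ A^G` over the finite shape `B` (a pattern is recorded by any
function `G → A` with the prescribed values on `B`). -/
def language {G A : Type u} (B : Finset G) (Y : Set (G → A)) : Set (G → A) :=
  {P | (cylinder B P ∩ Y).Nonempty}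

/-- `Y` is a shift of finite type over the finite shape `B`: it is cut out by a family of
forbidden patterns on `B`. -/
def IsSFTOver {G A : Type u} [Group G] (B : Finset G) (Y : Set (G → A)) : Prop :=
  ∃ ℱ : Set (G → A), Y = {x | ∀ g : G, ∀ P ∈ ℱ, shift G A g x ∉ cylinder B P}

/-- The shift action restricted to a subshift. -/
def subshiftDyn {G A : Type u} [Group G] [TopologicalSpace A] (Y : Set (G → A))
    (hY : IsSubshift Y) : DynAction G ↥Y where
  act g x := ⟨shift G A g x.1, hY.2 g x.1 x.2⟩
  continuous_act g := Continuous.subtype_mk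
    ((continuous_pi fun h => continuous_apply (h * g)).comp continuous_subtype_val) _
  act_one x := by apply Subtype.ext; funext h; simp [shift]
  act_mul g g' x := by apply Subtype.ext; funext h; simp [shift, mul_assoc]

/-! ### Hitting time sets and mixing-type properties -/

section Mixing

variable {G X : Type u} [Group G] [TopologicalSpace X]

/-- The hitting time set `N(U,V) = {g ≠ e : U ∩ Φ_{g⁻¹}(V) ≠ ∅}`. -/
def hittingTimes (Φ : DynAction G X) (U V : Set X) : Set G :=
  {g : G | g ≠ 1 ∧ (U ∩ Φ.act g⁻¹ '' V).Nonempty}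

/-- Topological mixing: `G \ N(U,V)` is finite for all nonempty open `U, V`. -/
def IsMixing (Φ : DynAction G X) : Prop :=
  ∀ U V : Set X, IsOpen U → IsOpen V → U.Nonempty → V.Nonempty →
    ((hittingTimes Φ U V)ᶜ : Set G).Finite

/-- Minimality: there is no nonempty proper closed invariant subset. -/
def IsMinimal (Φ : DynAction G X) : Prop :=
  ∀ K : Set X, IsClosed K → (∀ g : G, ∀ x ∈ K, Φ.act g x ∈ K) →
    K = ∅ ∨ K = Set.univ

end Mixing

/-! ### Inverse systems of subshifts -/

/-- An inverse system of dynamical systems whose terms are subshifts over finite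
(discrete) alphabets, with the shift `G`-action. -/
structure SubshiftInvSys (G : Type u) [Group G] (Λ : Type u) [Preorder Λ] where
  A : Λ → Type u
  [topoA : ∀ l, TopologicalSpace (A l)]
  [discA : ∀ l, DiscreteTopology (A l)]
  [finA : ∀ l, Finite (A l)]
  Y : ∀ l : Λ, Set (G → A l)
  subshift : ∀ l : Λ, IsSubshift (Y l)
  bond : ∀ {l m : Λ}, l ≤ m → ↥(Y m) → ↥(Y l)
  bond_cont : ∀ {l m : Λ} (h : l ≤ m), Continuous (bond h)
  bond_refl : ∀ (l : Λ) (x : ↥(Y l)), bond (le_refl l) x = x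
  bond_comp : ∀ {l m n : Λ} (h1 : l ≤ m) (h2 : m ≤ n) (x : ↥(Y n)),
    bond h1 (bond h2 x) = bond (h1.trans h2) x
  bond_equivariant : ∀ {l m : Λ} (h : l ≤ m) (g : G) (x : ↥(Y m)),
    (subshiftDyn (Y l) (subshift l)).act g (bond h x)
      = bond h ((subshiftDyn (Y m) (subshift m)).act g x)

namespace SubshiftInvSys

variable {G Λ : Type u} [Group G] [Preorder Λ]

instance (𝒮 : SubshiftInvSys G Λ) (l : Λ) : TopologicalSpace (𝒮.A l) := 𝒮.topoA l
instance (𝒮 : SubshiftInvSys G Λ) (l : Λ) : DiscreteTopology (𝒮.A l) := 𝒮.discA l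
instance (𝒮 : SubshiftInvSys G Λ) (l : Λ) : Finite (𝒮.A l) := 𝒮.finA l

/-- The `G`-action on the term `Y l` (the restricted shift). -/
def termDyn (𝒮 : SubshiftInvSys G Λ) (l : Λ) : DynAction G ↥(𝒮.Y l) :=
  subshiftDyn (𝒮.Y l) (𝒮.subshift l)

/-- The inverse limit of the system, as a subset of the product. -/
def limitSet (𝒮 : SubshiftInvSys G Λ) : Set (∀ l : Λ, ↥(𝒮.Y l)) :=
  {x | ∀ (l m : Λ) (h : l ≤ m), 𝒮.bond h (x m) = x l}

lemma act_mem_limitSet (𝒮 : SubshiftInvSys G Λ) (g : G) (x : ∀ l : Λ, ↥(𝒮.Y l))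
    (hx : x ∈ 𝒮.limitSet) : (fun l => (𝒮.termDyn l).act g (x l)) ∈ 𝒮.limitSet := by
  intro l m h
  show 𝒮.bond h ((𝒮.termDyn m).act g (x m)) = (𝒮.termDyn l).act g (x l)
  rw [show (𝒮.termDyn m).act g (x m)
        = (subshiftDyn (𝒮.Y m) (𝒮.subshift m)).act g (x m) from rfl,
      ← 𝒮.bond_equivariant h g (x m)]
  show (𝒮.termDyn l).act g (𝒮.bond h (x m)) = _
  rw [hx l m h]

/-- The induced `G`-action `σ*` on the inverse limit. -/
def limitDyn (𝒮 : SubshiftInvSys G Λ) : DynAction G ↥𝒮.limitSet where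
  act g x := ⟨fun l => (𝒮.termDyn l).act g (x.1 l), 𝒮.act_mem_limitSet g x.1 x.2⟩
  continuous_act g := Continuous.subtype_mk
    (continuous_pi fun l => ((𝒮.termDyn l).continuous_act g).comp
      ((continuous_apply l).comp continuous_subtype_val)) _
  act_one x := by
    apply Subtype.ext; funext l
    exact (𝒮.termDyn l).act_one (x.1 l)
  act_mul g g' x := by
    apply Subtype.ext; funext l
    exact (𝒮.termDyn l).act_mul g g' (x.1 l)

/-- The Mittag-Leffler condition. -/
def ML (𝒮 : SubshiftInvSys G Λ) : Prop :=
  ∀ l : Λ, ∃ m : Λ, ∃ h : l ≤ m, ∀ (n : Λ) (h' : m ≤ n),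
    Set.range (𝒮.bond (h.trans h')) = Set.range (𝒮.bond h)

end SubshiftInvSys

/-- An inverse system of subshifts over some directed index set, packaged together
with its (directed, preordered) index. -/
structure SubshiftInvSysPkg (G : Type u) [Group G] where
  Idx : Type u
  [pre : Preorder Idx]
  directed : IsDirected Idx (· ≤ ·)
  sys : SubshiftInvSys G Idx

namespace SubshiftInvSysPkg

variable {G : Type u} [Group G]

instance (P : SubshiftInvSysPkg G) : Preorder P.Idx := P.pre

end SubshiftInvSysPkg


/-!
The discrete quotients `Q` of `X` (its finite clopen partitions) give shifts of finite type
`Y_Q ⊆ Q^G` of pseudo-itineraries: words that near every `g` agree, along `S`, with the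
itinerary of some point. Itineraries map `X` into the inverse limit of the `Y_Q`, injectively
because clopen partitions separate points. Shadowing says precisely that a pseudo-itinerary over
a fine partition becomes a true itinerary once coarsened, which gives both the Mittag-Leffler
condition and surjectivity.

Conversely, shadowing passes through conjugacies, and an ML inverse limit of shifts of finite
type has it: a pseudo-orbit read at a fine level is a family of points of a shift of finite
type that is consistent along `S`; it is stitched along words in `S` into a single point, which
the Mittag-Leffler condition lifts to the limit.
-/

open Topology Pointwise

section Covers

variable {G X Y : Type u} [Group G] [TopologicalSpace X] [TopologicalSpace Y]

lemma IsFOC.exists_mem {𝒰 : Finset (Set X)} (h𝒰 : IsFOC 𝒰) (x : X) : ∃ U ∈ 𝒰, x ∈ U := by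
  have hx : x ∈ ⋃₀ (𝒰 : Set (Set X)) := h𝒰.2 ▸ mem_univ x
  simpa using hx

lemma IsFOC.preimage [DecidableEq (Set X)] {𝒰 : Finset (Set Y)} (h𝒰 : IsFOC 𝒰) {f : X → Y}
    (hf : Continuous f) : IsFOC (𝒰.image (f ⁻¹' ·)) := by
  refine ⟨fun V hV => ?_, eq_univ_of_forall fun x => ?_⟩
  · obtain ⟨U, hU, rfl⟩ := Finset.mem_image.mp hV
    exact (h𝒰.1 U hU).preimage hf
  · obtain ⟨U, hU, hxU⟩ := h𝒰.exists_mem (f x)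
    exact ⟨f ⁻¹' U, by simpa using ⟨U, hU, rfl⟩, hxU⟩

noncomputable def fiberCover {Z : Type*} [Finite Z] (π : X → Z) : Finset (Set X) :=
  (finite_range fun z : Z => π ⁻¹' {z}).toFinset

lemma isFOC_fiberCover {Z : Type*} [Finite Z] [TopologicalSpace Z] [DiscreteTopology Z]
    {π : X → Z} (hπ : Continuous π) : IsFOC (fiberCover π) := by
  refine ⟨fun U hU => ?_, eq_univ_of_forall fun x => ?_⟩
  · obtain ⟨z, rfl⟩ := (Set.Finite.mem_toFinset _).mp hU
    exact (isOpen_discrete _).preimage hπ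
  · exact ⟨π ⁻¹' {π x}, (Set.Finite.mem_toFinset _).mpr ⟨π x, rfl⟩, rfl⟩

lemma IsPseudoOrbit.eq_of_fiberCover {Φ : DynAction G X} {S : Set G} {Z : Type*} [Finite Z]
    {π : X → Z} {x : G → X} (hx : IsPseudoOrbit Φ S (fiberCover π) x) (g : G) {s : G}
    (hs : s ∈ S) : π (x (s * g)) = π (Φ.act s (x g)) := by
  obtain ⟨U, hU, hxU⟩ := hx
  obtain ⟨z, hz⟩ := (Set.Finite.mem_toFinset _).mp (hU (s * g))
  obtain ⟨h1, h2⟩ := hxU g s hs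
  rw [← hz] at h1 h2
  exact h1.trans h2.symm

end Covers

section Transfer

variable {G X Y : Type u} [Group G] [TopologicalSpace X] [TopologicalSpace Y]
  {ΦX : DynAction G X} {ΦY : DynAction G Y} {S : Set G} {f : X → Y}

lemma IsPseudoOrbit.map [DecidableEq (Set X)] (hf : IsEquivariant ΦX ΦY f)
    {𝒱 : Finset (Set Y)} {x : G → X} (hx : IsPseudoOrbit ΦX S (𝒱.image (f ⁻¹' ·)) x) :
    IsPseudoOrbit ΦY S 𝒱 (f ∘ x) := by
  obtain ⟨U, hU, hxU⟩ := hx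
  choose V hV hVU using fun g => Finset.mem_image.mp (hU g)
  refine ⟨V, hV, fun g s hs => ?_⟩
  have := hxU g s hs
  rw [← hVU] at this
  simpa [← hf s] using this

lemma Shadows.map [DecidableEq (Set X)] (hf : IsEquivariant ΦX ΦY f)
    {𝒰 : Finset (Set Y)} {z : X} {x : G → X} (h : Shadows ΦX (𝒰.image (f ⁻¹' ·)) z x) :
    Shadows ΦY 𝒰 (f z) (f ∘ x) := by
  intro g
  obtain ⟨V, hV, hzV, hxV⟩ := h g
  obtain ⟨U, hU, rfl⟩ := Finset.mem_image.mp hV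
  exact ⟨U, hU, hf g z ▸ hzV, hxV⟩

lemma ShadowingProperty.of_subsingleton [Subsingleton X] (Φ : DynAction G X) (S : Set G) :
    ShadowingProperty Φ S := fun 𝒰 h𝒰 =>
  ⟨𝒰, h𝒰, fun x _ => ⟨x 1, fun g => (h𝒰.exists_mem (x g)).imp fun _ ⟨hU, hx⟩ =>
    ⟨hU, Subsingleton.elim (x g) (Φ.act g (x 1)) ▸ hx, hx⟩⟩⟩

/-- A conjugacy from a compact space to a Hausdorff one is a homeomorphism, so covers can be
pulled back along it and along its inverse. -/
lemma ShadowingProperty.of_isConjugacy [CompactSpace X] [T2Space Y]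
    (hf : IsConjugacy ΦX ΦY f) (hY : ShadowingProperty ΦY S) : ShadowingProperty ΦX S := by
  classical
  obtain ⟨hfc, hfb, hfe⟩ := hf
  let e : X ≃ₜ Y := (show Continuous (Equiv.ofBijective f hfb) from hfc).homeoOfEquivCompactToT2
  have hef : ∀ x, e x = f x := fun _ => rfl
  have hfe' : ∀ y, f (e.symm y) = y := e.apply_symm_apply
  have he : IsEquivariant ΦY ΦX e.symm := fun g y => e.injective <| by
    rw [hef, hef, hfe, hfe', hfe']
  intro 𝒰 h𝒰
  obtain ⟨𝒱, h𝒱, hsh⟩ := hY _ (h𝒰.preimage e.symm.continuous)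
  refine ⟨_, h𝒱.preimage hfc, fun x hx => ?_⟩
  obtain ⟨z, hz⟩ := hsh _ (hx.map hfe)
  refine ⟨e.symm z, ?_⟩
  simpa [Function.comp_def, ← hef] using hz.map he

end Transfer

section Lebesgue

variable {X ι : Type*} {Z : ι → Type*} [TopologicalSpace X] [∀ i, TopologicalSpace (Z i)]
  {e : X → ∀ i, Z i}

lemma Topology.IsInducing.exists_finset_cylinder_subset (he : IsInducing e) {O : Set X}
    (hO : IsOpen O) {x : X} (hx : x ∈ O) :
    ∃ T : Finset ι, ∀ y, (∀ i ∈ T, e y i = e x i) → y ∈ O := by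
  obtain ⟨O', hO', rfl⟩ := he.isOpen_iff.mp hO
  obtain ⟨T, u, hu, hsub⟩ := isOpen_pi_iff.mp hO' (e x) hx
  exact ⟨T, fun y hy => hsub fun i hi => (hy i hi).symm ▸ (hu i hi).2⟩

variable [∀ i, DiscreteTopology (Z i)]

lemma isOpen_cylinder_preimage (he : Continuous e) (T : Finset ι) (x : X) :
    IsOpen {y | ∀ i ∈ T, e y i = e x i} := by
  simp only [ofPred_forall]
  exact isOpen_biInter_finset fun i _ =>
    (isOpen_discrete {e x i}).preimage ((continuous_apply i).comp he)

lemma Topology.IsInducing.lebesgue_number_lemma_cylinder [CompactSpace X] (he : IsInducing e)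
    {κ : Type*} {U : κ → Set X} (hU : ∀ k, IsOpen (U k)) (hcover : ⋃ k, U k = univ) :
    ∃ T : Finset ι, ∀ x, ∃ k, ∀ y, (∀ i ∈ T, e y i = e x i) → y ∈ U k := by
  classical
  have hx : ∀ x, ∃ k, x ∈ U k := fun x => mem_iUnion.mp (hcover ▸ mem_univ x)
  choose k hk using hx
  choose T hT using fun x => he.exists_finset_cylinder_subset (hU (k x)) (hk x)
  obtain ⟨C, hC⟩ := isCompact_univ.elim_finite_subcover (fun x => {y | ∀ i ∈ T x, e y i = e x i})
    (fun x => isOpen_cylinder_preimage he.continuous _ x) fun x _ =>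
      mem_iUnion.mpr ⟨x, fun _ _ => rfl⟩
  refine ⟨C.biUnion T, fun x => ?_⟩
  obtain ⟨c, hc, hxc⟩ := mem_iUnion₂.mp (hC (mem_univ x))
  exact ⟨k c, fun y hy => hT c y fun i hi =>
    (hy i (Finset.mem_biUnion.mpr ⟨c, hc, hi⟩)).trans (hxc i hi)⟩

lemma Continuous.exists_finset_cylinder_const [CompactSpace X] (he : IsInducing e) {W : Type*}
    [TopologicalSpace W] [DiscreteTopology W] {ψ : X → W} (hψ : Continuous ψ) :
    ∃ T : Finset ι, ∀ x y, (∀ i ∈ T, e y i = e x i) → ψ y = ψ x := by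
  obtain ⟨T, hT⟩ := he.lebesgue_number_lemma_cylinder (U := fun w => ψ ⁻¹' {w})
    (fun w => (isOpen_discrete _).preimage hψ) (iUnion_eq_univ_iff.mpr fun x => ⟨ψ x, rfl⟩)
  refine ⟨T, fun x y hy => ?_⟩
  obtain ⟨w, hw⟩ := hT x
  exact (hw y hy).trans (hw x fun _ _ => rfl).symm

end Lebesgue

section WordBall

variable {G : Type*} [Group G]

def wordBall (S : Set G) (n : ℕ) : Set G := insert 1 (S ∪ S⁻¹) ^ n

variable {S : Set G}

lemma wordBall_mono {m n : ℕ} (h : m ≤ n) : wordBall S m ⊆ wordBall S n :=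
  Set.pow_subset_pow_right (mem_insert 1 _) h

lemma wordBall_finite (hS : S.Finite) (n : ℕ) : (wordBall S n).Finite := by
  induction n with
  | zero => simp [wordBall]
  | succ n ih => exact ih.mul ((hS.union hS.inv).insert 1)

lemma exists_mem_wordBall (hgen : Subgroup.closure S = ⊤) (g : G) : ∃ n, g ∈ wordBall S n := by
  have hg : g ∈ Subgroup.closure S := hgen ▸ Subgroup.mem_top g
  induction hg using Subgroup.closure_induction'' with
  | mem s hs => exact ⟨1, by simp [wordBall, hs]⟩
  | inv_mem s hs => exact ⟨1, by simp [wordBall, hs]⟩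
  | one => exact ⟨0, by simp [wordBall]⟩
  | mul u v _ _ hu hv =>
    obtain ⟨a, ha⟩ := hu
    obtain ⟨b, hb⟩ := hv
    exact ⟨a + b, by rw [wordBall, pow_add]; exact Set.mul_mem_mul ha hb⟩

lemma exists_subset_wordBall (hgen : Subgroup.closure S = ⊤) (F : Finset G) :
    ∃ N, ↑F ⊆ wordBall S N := by
  choose n hn using exists_mem_wordBall hgen
  exact ⟨F.sup n, fun g hg => wordBall_mono (Finset.le_sup hg) (hn g)⟩

end WordBall

section Subshift

variable {G A : Type u}

lemma isOpen_cylinder [TopologicalSpace A] [DiscreteTopology A] (B : Finset G) (P : G → A) :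
    IsOpen (cylinder B P) := by
  simp only [cylinder, ofPred_forall]
  exact isOpen_biInter_finset fun b _ =>
    (continuous_apply (A := fun _ => A) b).isOpen_preimage {P b} (isOpen_discrete _)

variable [Group G]

lemma shift_shift (g h : G) (x : G → A) : shift G A g (shift G A h x) = shift G A (g * h) x := by
  funext k; simp [shift, mul_assoc]

lemma IsSFTOver.isSubshift [TopologicalSpace A] [DiscreteTopology A] {B : Finset G}
    {Y : Set (G → A)} (hY : IsSFTOver B Y) : IsSubshift Y := by
  obtain ⟨ℱ, rfl⟩ := hY
  refine ⟨?_, fun h x hx g P hP => by simpa [shift_shift] using hx (g * h) P hP⟩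
  simp only [ofPred_forall]
  exact isClosed_iInter fun g => isClosed_biInter fun P _ =>
    (isOpen_cylinder B P).isClosed_compl.preimage ((shiftDyn G A).continuous_act g)

lemma IsSFTOver.mem_of_locally_mem {B : Finset G} {Y : Set (G → A)} (hY : IsSFTOver B Y)
    {x : G → A} (hx : ∀ g, ∃ w ∈ Y, ∀ b ∈ B, x (b * g) = w b) : x ∈ Y := by
  obtain ⟨ℱ, rfl⟩ := hY
  intro g P hP hxP
  obtain ⟨w, hw, hxw⟩ := hx g
  refine hw 1 P hP fun b hb => ?_
  simpa [shift, hxw b hb] using hxP b hb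

lemma apply_one_eq_of_consistent {S : Set G} {N : ℕ} {ω : G → G → A}
    (hω : ∀ g, ∀ s ∈ S, ∀ b ∈ wordBall S N, ω (s * g) b = ω g (b * s)) :
    ∀ u ∈ wordBall S N, ∀ g, ω (u * g) 1 = ω g u := by
  have step : ∀ t ∈ insert 1 (S ∪ S⁻¹), ∀ g, ∀ b ∈ wordBall S N, b * t ∈ wordBall S N →
      ω (t * g) b = ω g (b * t) := by
    rintro t (rfl | hs | hs) g b hb hbt
    · simp
    · exact hω g t hs b hb
    · have := hω (t * g) t⁻¹ hs (b * t) hbt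
      simp only [inv_mul_cancel_left, mul_inv_cancel_right] at this
      exact this.symm
  suffices ∀ n ≤ N, ∀ u ∈ wordBall S n, ∀ g, ω (u * g) 1 = ω g u from this N le_rfl
  intro n
  induction n with
  | zero => intro _ u hu g; simp_all [wordBall]
  | succ n ih =>
    intro hn u hu g
    rw [wordBall, pow_succ] at hu
    obtain ⟨v, hv, t, ht, rfl⟩ := hu
    rw [mul_assoc, ih (by omega) v hv, step t ht g v (wordBall_mono (by omega) hv)]
    exact wordBall_mono hn (by rw [wordBall, pow_succ]; exact Set.mul_mem_mul hv ht)

/-- The shadowing property of shifts of finite type, in coordinates. -/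
lemma IsSFTOver.exists_shadow {B : Finset G} {Y : Set (G → A)} (hY : IsSFTOver B Y)
    {S : Set G} (hS : S.Finite) (hgen : Subgroup.closure S = ⊤) (F : Finset G) :
    ∃ E : Finset G, ∀ ω : G → G → A, (∀ g, ω g ∈ Y) →
      (∀ g, ∀ s ∈ S, ∀ b ∈ E, ω (s * g) b = ω g (b * s)) →
      ∃ y ∈ Y, ∀ g, ∀ b ∈ F, y (b * g) = ω g b := by
  classical
  obtain ⟨N, hN⟩ := exists_subset_wordBall hgen (F ∪ B)
  refine ⟨(wordBall_finite hS N).toFinset, fun ω hωY hω => ?_⟩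
  simp only [Finite.mem_toFinset] at hω
  have hy : ∀ g, ∀ b ∈ F ∪ B, ω (b * g) 1 = ω g b := fun g b hb =>
    apply_one_eq_of_consistent hω b (hN (Finset.mem_coe.mpr hb)) g
  exact ⟨fun g => ω g 1, hY.mem_of_locally_mem fun g =>
    ⟨ω g, hωY g, fun b hb => hy g b (by simp [hb])⟩, fun g b hb => hy g b (by simp [hb])⟩

end Subshift

namespace SubshiftInvSys

variable {G Λ : Type u} [Group G] [Preorder Λ] (𝒮 : SubshiftInvSys G Λ)

instance compactSpace_Y (l : Λ) : CompactSpace (𝒮.Y l) :=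
  isCompact_iff_compactSpace.mp (𝒮.subshift l).1.isCompact

lemma isClosed_limitSet : IsClosed 𝒮.limitSet := by
  simp only [limitSet, ofPred_forall]
  exact isClosed_iInter fun l => isClosed_iInter fun m => isClosed_iInter fun h =>
    isClosed_eq ((𝒮.bond_cont h).comp (continuous_apply m)) (continuous_apply l)

instance compactSpace_limitSet : CompactSpace 𝒮.limitSet :=
  isCompact_iff_compactSpace.mp 𝒮.isClosed_limitSet.isCompact

lemma isInducing_coords :
    IsInducing (fun z : 𝒮.limitSet => fun p : (Σ _ : Λ, G) => (z.1 p.1).1 p.2) := by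
  have uncurry : IsInducing (fun (x : ∀ l, G → 𝒮.A l) (p : Σ _ : Λ, G) => x p.1 p.2) :=
    (Function.LeftInverse.isEmbedding (f := fun y l g => y ⟨l, g⟩) (fun _ => rfl)
      (continuous_pi fun _ => continuous_pi fun _ => continuous_apply _)
      (continuous_pi fun _ => (continuous_apply _).comp (continuous_apply _))).isInducing
  exact uncurry.comp ((IsInducing.piMap fun _ => IsInducing.subtypeVal).comp
    IsInducing.subtypeVal)

variable {𝒮}

lemma exists_mem_limitSet_of_forall_mem_range [IsDirected Λ (· ≤ ·)] {l : Λ} {c : 𝒮.Y l}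
    (hc : ∀ n (h : l ≤ n), c ∈ range (𝒮.bond h)) : ∃ z ∈ 𝒮.limitSet, z l = c := by
  have hne : ∀ k, Nonempty (𝒮.Y k) := fun k =>
    let ⟨n, hk, hl⟩ := exists_ge_ge k l
    ⟨𝒮.bond hk (hc n hl).choose⟩
  let Z : Λ → Set (∀ k, 𝒮.Y k) := fun n =>
    {x | x l = c ∧ ∀ p q (hpq : p ≤ q), q ≤ n → 𝒮.bond hpq (x q) = x p}
  have hZ_closed : ∀ n, IsClosed (Z n) := fun n => by
    simp only [Z, ofPred_and, ofPred_forall]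
    refine (isClosed_eq (continuous_apply l) continuous_const).inter <|
      isClosed_iInter fun p => isClosed_iInter fun q => isClosed_iInter fun hpq =>
        isClosed_iInter fun _ => isClosed_eq ((𝒮.bond_cont hpq).comp (continuous_apply q))
          (continuous_apply p)
  have hZ_ne : ∀ n, (Z n).Nonempty := fun n => by
    classical
    obtain ⟨n', hln', hnn'⟩ := exists_ge_ge l n
    obtain ⟨b, hb⟩ := hc n' hln'
    refine ⟨fun k => if hk : k ≤ n' then 𝒮.bond hk b else Classical.arbitrary _, ?_, ?_⟩
    · simp [hln', hb]
    · intro p q hpq hqn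
      simp [hqn.trans hnn', hpq.trans (hqn.trans hnn'), 𝒮.bond_comp]
  have hZ_dir : Directed (· ⊇ ·) Z := directed_of_isDirected_le fun n n' hnn' x hx =>
    ⟨hx.1, fun p q hpq hqn => hx.2 p q hpq (hqn.trans hnn')⟩
  have : Nonempty Λ := ⟨l⟩
  obtain ⟨x, hx⟩ := IsCompact.nonempty_iInter_of_directed_nonempty_isCompact_isClosed Z hZ_dir
    hZ_ne (fun n => (hZ_closed n).isCompact) hZ_closed
  rw [mem_iInter] at hx
  exact ⟨x, fun p q hpq => (hx q).2 p q hpq le_rfl, (hx l).1⟩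

lemma ML.exists_lift [IsDirected Λ (· ≤ ·)] (hML : 𝒮.ML) (l : Λ) :
    ∃ m, ∃ h : l ≤ m, ∀ y : 𝒮.Y m, ∃ z ∈ 𝒮.limitSet, z l = 𝒮.bond h y := by
  obtain ⟨m, hlm, hstable⟩ := hML l
  refine ⟨m, hlm, fun y => exists_mem_limitSet_of_forall_mem_range fun n hln => ?_⟩
  obtain ⟨n', hnn', hmn'⟩ := exists_ge_ge n m
  obtain ⟨b, hb⟩ := (hstable n' hmn').symm ▸ mem_range_self (f := 𝒮.bond hlm) y
  exact ⟨𝒮.bond hnn' b, by rw [𝒮.bond_comp, hb]⟩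

lemma exists_finset_determining_bond (T : Finset (Σ _ : Λ, G)) (m : Λ) :
    ∃ D : Finset G, ∀ u v : 𝒮.Y m, (∀ b ∈ D, v.1 b = u.1 b) →
      ∀ p ∈ T, ∀ h : p.1 ≤ m, (𝒮.bond h v).1 p.2 = (𝒮.bond h u).1 p.2 := by
  classical
  have hwin : ∀ p : Σ _ : Λ, G, ∃ D : Finset G, ∀ h : p.1 ≤ m, ∀ u v : 𝒮.Y m,
      (∀ b ∈ D, v.1 b = u.1 b) → (𝒮.bond h v).1 p.2 = (𝒮.bond h u).1 p.2 := fun p => by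
    by_cases h : p.1 ≤ m
    · obtain ⟨D, hD⟩ := Continuous.exists_finset_cylinder_const IsInducing.subtypeVal
        ((continuous_apply p.2).comp (continuous_subtype_val.comp (𝒮.bond_cont h)))
      exact ⟨D, fun _ => hD⟩
    · exact ⟨∅, fun h' => absurd h' h⟩
  choose D hD using hwin
  exact ⟨T.biUnion D, fun u v huv p hp h =>
    hD p h u v fun b hb => huv b (Finset.mem_biUnion.mpr ⟨p, hp, hb⟩)⟩

lemma limitDyn_act_apply_of_le {z : 𝒮.limitSet} {k l m : Λ} (hkl : k ≤ l) (hlm : l ≤ m)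
    {u : 𝒮.Y m} (hz : z.1 l = 𝒮.bond hlm u) (g : G) :
    (𝒮.limitDyn.act g z).1 k = 𝒮.bond (hkl.trans hlm) ((𝒮.termDyn m).act g u) := by
  change (𝒮.termDyn k).act g (z.1 k) = _
  rw [← z.2 k l hkl, hz, 𝒮.bond_comp]
  exact 𝒮.bond_equivariant _ g u

/-- Read a pseudo-orbit of the limit at a level `m` fine enough for the target cover, stitch
it into a point of the shift of finite type `Y m` there, and lift that point to the limit
through the Mittag-Leffler condition. -/
theorem shadowingProperty_limitDyn [IsDirected Λ (· ≤ ·)] (hML : 𝒮.ML)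
    (hSFT : ∀ l, ∃ B : Finset G, IsSFTOver B (𝒮.Y l)) {S : Set G} (hS : S.Finite)
    (hgen : Subgroup.closure S = ⊤) : ShadowingProperty 𝒮.limitDyn S := by
  classical
  rcases isEmpty_or_nonempty Λ with hΛ | hΛ
  · exact .of_subsingleton _ _
  intro 𝒰 h𝒰
  obtain ⟨T, hT⟩ := 𝒮.isInducing_coords.lebesgue_number_lemma_cylinder
    (U := fun U : 𝒰 => U.1) (fun U => h𝒰.1 _ U.2) (by simpa [sUnion_eq_iUnion] using h𝒰.2)
  obtain ⟨l, hl⟩ := (T.image Sigma.fst).exists_le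
  obtain ⟨m, hlm, hlift⟩ := hML.exists_lift l
  obtain ⟨D, hD⟩ := exists_finset_determining_bond (𝒮 := 𝒮) T m
  obtain ⟨B, hB⟩ := hSFT m
  obtain ⟨E, hE⟩ := hB.exists_shadow hS hgen D
  let π : 𝒮.limitSet → (E → 𝒮.A m) := fun z b => (z.1 m).1 b
  have hπ : Continuous π := continuous_pi fun b => (continuous_apply b.1).comp
    (continuous_subtype_val.comp ((continuous_apply m).comp continuous_subtype_val))
  refine ⟨fiberCover π, isFOC_fiberCover hπ, fun x hx => ?_⟩
  obtain ⟨y, hyY, hy⟩ := hE (fun g => ((x g).1 m).1) (fun g => ((x g).1 m).2)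
    fun g s hs b hb => congrFun (hx.eq_of_fiberCover g hs) ⟨b, hb⟩
  obtain ⟨z, hz, hzl⟩ := hlift ⟨y, hyY⟩
  refine ⟨⟨z, hz⟩, fun g => ?_⟩
  obtain ⟨⟨U, hU⟩, hxU⟩ := hT (x g)
  refine ⟨U, hU, hxU _ fun p hp => ?_, hxU (x g) fun _ _ => rfl⟩
  have hpl : p.1 ≤ l := hl p.1 (Finset.mem_image_of_mem _ hp)
  change ((𝒮.limitDyn.act g ⟨z, hz⟩).1 p.1).1 p.2 = ((x g).1 p.1).1 p.2
  rw [limitDyn_act_apply_of_le hpl hlm hzl, ← (x g).2 p.1 m (hpl.trans hlm)]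
  exact hD _ _ (fun b hb => hy g b hb) p hp _

end SubshiftInvSys

section Itineraries

open DiscreteQuotient

variable {G X : Type u} [Group G] [TopologicalSpace X]

lemma exists_discreteQuotient_fiber_subset [CompactSpace X] [T2Space X]
    [TotallyDisconnectedSpace X] {𝒱 : Finset (Set X)} (h𝒱 : IsFOC 𝒱) :
    ∃ Q : DiscreteQuotient X, ∀ x, ∃ V ∈ 𝒱, Q.proj ⁻¹' {Q.proj x} ⊆ V := by
  classical
  have hC : ∀ x, ∃ C, IsClopen C ∧ x ∈ C ∧ ∃ V ∈ 𝒱, C ⊆ V := fun x => by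
    obtain ⟨V, hV, hxV⟩ := h𝒱.exists_mem x
    obtain ⟨C, hC, hxC, hCV⟩ := compact_exists_isClopen_in_isOpen (h𝒱.1 V hV) hxV
    exact ⟨C, hC, hxC, V, hV, hCV⟩
  choose C hC hxC V hV hCV using hC
  obtain ⟨T, hT⟩ := isCompact_univ.elim_finite_subcover C (fun x => (hC x).isOpen)
    fun x _ => mem_iUnion.mpr ⟨x, hxC x⟩
  refine ⟨T.inf fun t => ofIsClopen (hC t), fun x => ?_⟩
  obtain ⟨t, ht, hxt⟩ := mem_iUnion₂.mp (hT (mem_univ x))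
  refine ⟨V t, hV t, fun y hy => hCV t ?_⟩
  have hle : T.inf (fun t => ofIsClopen (hC t)) ≤ ofIsClopen (hC t) := Finset.inf_le ht
  have := fiber_subset_ofLE hle _ hy
  rw [ofLE_proj, mem_preimage, mem_singleton_iff] at this
  exact (Quotient.exact' this).mpr hxt

variable (Φ : DynAction G X) (S : Finset G)

def pseudoItineraries (Q : DiscreteQuotient X) : Set (G → Q) :=
  {w | ∀ g, ∃ x, Q.proj x = w g ∧ ∀ s ∈ S, Q.proj (Φ.act s x) = w (s * g)}

lemma isSFTOver_pseudoItineraries [DecidableEq G] (Q : DiscreteQuotient X) :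
    IsSFTOver (insert 1 S) (pseudoItineraries Φ S Q) := by
  refine ⟨{P | ¬ ∃ x, Q.proj x = P 1 ∧ ∀ s ∈ S, Q.proj (Φ.act s x) = P s}, ?_⟩
  ext w
  refine forall_congr' fun g => ⟨fun ⟨x, hx1, hxS⟩ P hP hwP => hP ⟨x, ?_, fun s hs => ?_⟩,
    fun h => not_not.mp fun hg => h (shift G Q g w) (by simpa [shift] using hg) fun _ _ => rfl⟩
  · simpa [shift, hx1] using hwP 1 (Finset.mem_insert_self 1 S)
  · simpa [shift, hxS s hs] using hwP s (Finset.mem_insert_of_mem hs)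

lemma comp_ofLE_mem_pseudoItineraries {Q Q' : DiscreteQuotient X} (h : Q' ≤ Q) {w : G → Q'}
    (hw : w ∈ pseudoItineraries Φ S Q') : ofLE h ∘ w ∈ pseudoItineraries Φ S Q := fun g =>
  let ⟨x, hx1, hxS⟩ := hw g
  ⟨x, by simp [← hx1, ofLE_proj], fun s hs => by simp [← hxS s hs, ofLE_proj]⟩

def itinerary (Q : DiscreteQuotient X) (x : X) : pseudoItineraries Φ S Q :=
  ⟨fun g => Q.proj (Φ.act g x), fun g => ⟨Φ.act g x, rfl, fun s _ => by rw [← Φ.act_mul]⟩⟩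

lemma continuous_itinerary (Q : DiscreteQuotient X) : Continuous (itinerary Φ S Q) :=
  (continuous_pi fun g => Q.proj_continuous.comp (Φ.continuous_act g)).subtype_mk _

/-- A pseudo-itinerary over `R` is a pseudo-orbit for the cover by `R`-classes, and a point
shadowing it for the cover by `Q`-classes has the coarsened word as its itinerary. -/
lemma exists_itinerary_eq_of_shadowing [CompactSpace X] [T2Space X] [TotallyDisconnectedSpace X]
    (hsh : ShadowingProperty Φ (S : Set G)) (Q : DiscreteQuotient X) :
    ∃ Q₀ ≤ Q, ∀ Q' (h : Q' ≤ Q), Q' ≤ Q₀ → ∀ w ∈ pseudoItineraries Φ S Q',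
      ∃ z, (itinerary Φ S Q z).1 = ofLE h ∘ w := by
  obtain ⟨𝒱, h𝒱, hshadow⟩ := hsh _ (isFOC_fiberCover Q.proj_continuous)
  obtain ⟨R, hR⟩ := exists_discreteQuotient_fiber_subset h𝒱
  refine ⟨Q ⊓ R, inf_le_left, fun Q' h hQ' w hw => ?_⟩
  choose x hx1 hxS using hw
  have hV' : ∀ g, ∃ V ∈ 𝒱, Q'.proj ⁻¹' {w g} ⊆ V := fun g => by
    obtain ⟨V, hV, hRV⟩ := hR (x g)
    refine ⟨V, hV, fun y hy => hRV ?_⟩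
    have := fiber_subset_ofLE (hQ'.trans inf_le_right) _ (hx1 g ▸ hy)
    rwa [ofLE_proj] at this
  choose V hV hwV using hV'
  obtain ⟨z, hz⟩ := hshadow x ⟨V, hV, fun g s hs =>
    ⟨hwV _ (hx1 (s * g)), hwV _ (by simpa using hxS g s hs)⟩⟩
  refine ⟨z, funext fun g => ?_⟩
  obtain ⟨U, hU, hzU, hxU⟩ := hz g
  obtain ⟨q, rfl⟩ := (Finite.mem_toFinset _).mp hU
  change Q.proj (Φ.act g z) = ofLE h (w g)
  rw [hzU, ← hxU, ← hx1 g, ofLE_proj]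

end Itineraries

section ItinerarySystem

open DiscreteQuotient OrderDual

variable {G X : Type u} [Group G] [TopologicalSpace X] [CompactSpace X]
  (Φ : DynAction G X) (S : Finset G)

/-- Indexed by the discrete quotients of `X`, finer ones being larger. -/
def itinerarySystem : SubshiftInvSys G (DiscreteQuotient X)ᵒᵈ where
  A Q := ↥(ofDual Q)
  topoA Q := (inferInstance : TopologicalSpace ↥(ofDual Q))
  discA Q := (inferInstance : DiscreteTopology ↥(ofDual Q))
  finA Q := (inferInstance : Finite ↥(ofDual Q))
  Y Q := pseudoItineraries Φ S (ofDual Q)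
  subshift Q := by classical exact (isSFTOver_pseudoItineraries Φ S (ofDual Q)).isSubshift
  bond h w := ⟨ofLE h ∘ w.1, comp_ofLE_mem_pseudoItineraries Φ S h w.2⟩
  bond_cont h := ((continuous_pi fun g => (ofLE_continuous h).comp (continuous_apply g)).comp
    continuous_subtype_val).subtype_mk _
  bond_refl _ _ := Subtype.ext <| funext fun _ => ofLE_refl_apply _
  bond_comp h₁ h₂ _ := Subtype.ext <| funext fun _ => ofLE_ofLE h₂ h₁ _
  bond_equivariant _ _ _ := rfl

lemma itinerarySystem_bond_itinerary {Q Q' : (DiscreteQuotient X)ᵒᵈ} (h : Q ≤ Q') (x : X) :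
    (itinerarySystem Φ S).bond h (itinerary Φ S (ofDual Q') x) = itinerary Φ S (ofDual Q) x :=
  Subtype.ext <| funext fun _ => ofLE_proj (show ofDual Q' ≤ ofDual Q from h) _

def toLimit (x : X) : (itinerarySystem Φ S).limitSet :=
  ⟨fun Q => itinerary Φ S (ofDual Q) x, fun _ _ h => itinerarySystem_bond_itinerary Φ S h x⟩

variable [T2Space X] [TotallyDisconnectedSpace X] {Φ S}

lemma range_bond_eq_range_itinerary (hsh : ShadowingProperty Φ (S : Set G))
    (Q : (DiscreteQuotient X)ᵒᵈ) : ∃ Q₀, ∃ h : Q ≤ Q₀, ∀ Q' (h' : Q₀ ≤ Q'),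
      range ((itinerarySystem Φ S).bond (h.trans h')) = range (itinerary Φ S (ofDual Q)) := by
  obtain ⟨Q₀, hQ₀, hreal⟩ := exists_itinerary_eq_of_shadowing Φ S hsh (ofDual Q)
  refine ⟨toDual Q₀, hQ₀, fun Q' h' => Subset.antisymm ?_ ?_⟩
  · rintro _ ⟨w, rfl⟩
    obtain ⟨z, hz⟩ := hreal (ofDual Q') ((show ofDual Q' ≤ Q₀ from h').trans hQ₀) h' w.1 w.2
    exact ⟨z, Subtype.ext hz⟩
  · rintro _ ⟨x, rfl⟩
    exact ⟨_, itinerarySystem_bond_itinerary Φ S _ x⟩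

lemma itinerarySystem_ML (hsh : ShadowingProperty Φ (S : Set G)) : (itinerarySystem Φ S).ML :=
  fun Q =>
    let ⟨Q₀, h, hrange⟩ := range_bond_eq_range_itinerary hsh Q
    ⟨Q₀, h, fun Q' h' => by rw [hrange Q' h', ← hrange Q₀ le_rfl]⟩

lemma toLimit_injective : Function.Injective (toLimit Φ S) := fun x y hxy =>
  eq_of_forall_proj_eq fun Q => by
    have hQ := congrArg (fun w : (itinerarySystem Φ S).limitSet => (w.1 (toDual Q)).1 1) hxy
    simp only [toLimit, itinerary, Φ.act_one] at hQ
    exact hQ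

/-- A point of the limit is the itinerary of any point in the intersection of the closed sets
`{z | itinerary Q z = w Q}`, which are nonempty by shadowing and decrease as `Q` is refined. -/
lemma toLimit_surjective (hsh : ShadowingProperty Φ (S : Set G)) :
    Function.Surjective (toLimit Φ S) := by
  intro w
  let C : (DiscreteQuotient X)ᵒᵈ → Set X := fun Q => {z | itinerary Φ S (ofDual Q) z = w.1 Q}
  have hC_closed : ∀ Q, IsClosed (C Q) := fun Q =>
    isClosed_eq (continuous_itinerary Φ S _) continuous_const
  have hC_ne : ∀ Q, (C Q).Nonempty := fun Q => by
    obtain ⟨Q₀, h, hrange⟩ := range_bond_eq_range_itinerary hsh Q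
    obtain ⟨z, hz⟩ : w.1 Q ∈ range (itinerary Φ S (ofDual Q)) :=
      hrange Q₀ le_rfl ▸ ⟨w.1 Q₀, w.2 Q Q₀ _⟩
    exact ⟨z, hz⟩
  have hC_dir : Directed (· ⊇ ·) C := directed_of_isDirected_le fun Q Q' h z hz => by
    change itinerary Φ S (ofDual Q) z = w.1 Q
    rw [← itinerarySystem_bond_itinerary Φ S h z, show itinerary Φ S _ z = w.1 Q' from hz,
      w.2 Q Q' h]
  obtain ⟨z, hz⟩ := IsCompact.nonempty_iInter_of_directed_nonempty_isCompact_isClosed C hC_dir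
    hC_ne (fun Q => (hC_closed Q).isCompact) hC_closed
  exact ⟨z, Subtype.ext <| funext <| mem_iInter.mp hz⟩

lemma isConjugacy_toLimit (hsh : ShadowingProperty Φ (S : Set G)) :
    IsConjugacy Φ (itinerarySystem Φ S).limitDyn (toLimit Φ S) := by
  refine ⟨(continuous_pi fun Q => continuous_itinerary Φ S _).subtype_mk _,
    ⟨toLimit_injective, toLimit_surjective hsh⟩, fun g x => ?_⟩
  refine Subtype.ext <| funext fun Q => Subtype.ext <| funext fun h => ?_
  exact congrArg (ofDual Q).proj (Φ.act_mul h g x).symm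

end ItinerarySystem

theorem shadowing_iff_conjugate_invlim_SFT_general
    {G X : Type} [Group G] [TopologicalSpace X]
    [CompactSpace X] [T2Space X] [TotallyDisconnectedSpace X]
    (Φ : DynAction G X) (S : Finset G)
    (hgen : Subgroup.closure (S : Set G) = ⊤) :
    ShadowingProperty Φ (S : Set G) ↔
      ∃ P : SubshiftInvSysPkg G,
        P.sys.ML ∧
        (∀ l : P.Idx, ∃ B : Finset G, IsSFTOver B (P.sys.Y l)) ∧
        ∃ f : X → ↥P.sys.limitSet, IsConjugacy Φ P.sys.limitDyn f := by
  classical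
  constructor
  · intro hsh
    exact ⟨{ Idx := (DiscreteQuotient X)ᵒᵈ, directed := inferInstance, sys := itinerarySystem Φ S },
      itinerarySystem_ML hsh, fun Q => ⟨insert 1 S, isSFTOver_pseudoItineraries Φ S _⟩,
      toLimit Φ S, isConjugacy_toLimit hsh⟩
  · rintro ⟨P, hML, hSFT, f, hf⟩
    have := P.directed
    exact .of_isConjugacy hf
      (SubshiftInvSys.shadowingProperty_limitDyn hML hSFT S.finite_toSet hgen)

/-- **Corollary 1.2.** For a compact totally disconnected Hausdorff space and a finitely
generated group `G` with finite generator `S`, `Φ` has the `S`-shadowing property iff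
`(X,G,Φ)` is conjugate to the inverse limit of an ML inverse system of shifts of finite
type. -/
theorem shadowing_iff_conjugate_invlim_SFT
    {G X : Type} [Group G] [Countable G] [TopologicalSpace X]
    [CompactSpace X] [T2Space X] [TotallyDisconnectedSpace X]
    (Φ : DynAction G X) (S : Finset G)
    (hgen : Subgroup.closure (S : Set G) = ⊤) :
    ShadowingProperty Φ (S : Set G) ↔
      ∃ P : SubshiftInvSysPkg G,
        P.sys.ML ∧
        (∀ l : P.Idx, ∃ B : Finset G, IsSFTOver B (P.sys.Y l)) ∧
        ∃ f : X → ↥P.sys.limitSet, IsConjugacy Φ P.sys.limitDyn f :=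
  shadowing_iff_conjugate_invlim_SFT_general Φ S hgen
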